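/- Let G be a group of order 36 with a subgroup H of order 9, let L₀ ≤ H be a subgroup of order 3, let R₀ = {r₁, r₂, r₃} and R₁ be subsets of H, and let g ∈ G be such that {1, r₁g, r₂g, r₃g} is a left transversal of H in G. Then the element S := L̂₀ − R₀·g·R̂₁ of ℤ[G], where L̂₀ = H − 2L₀ and R̂₁ = H − 2R₁ (sums taken in ℤ[G]), has all of its coefficients equal to 1 or −1. -/

import Mathlib

/-- The group ring element `∑_{x ∈ X} x` associated to a subset `X` of a group `G`. -/
noncomputable def grpSum {G : Type*} [Group G] (X : Finset G) : MonoidAlgebra ℤ G :=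
  ∑ x ∈ X, MonoidAlgebra.single x (1 : ℤ)

/-- The finset of elements of a subgroup of a finite group. -/
noncomputable def subFinset {G : Type*} [Group G] [Finite G] (K : Subgroup G) : Finset G :=
  (Set.toFinite (K : Set G)).toFinset

lemma grpSum_apply {G : Type*} [Group G] [DecidableEq G] (X : Finset G) (y : G) :
    (grpSum X).coeff y = if y ∈ X then 1 else 0 := by
  classical
  rw [grpSum, MonoidAlgebra.coeff_sum, Finsupp.finset_sum_apply]
  simp [MonoidAlgebra.coeff_single, Finsupp.single_apply]

lemma two_mul_apply {G : Type*} [Group G] (f : MonoidAlgebra ℤ G) (y : G) :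
    ((2 : MonoidAlgebra ℤ G) * f).coeff y = 2 * f.coeff y := by
  rw [two_mul, MonoidAlgebra.coeff_add, Finsupp.add_apply, two_mul]

lemma mem_subFinset {G : Type*} [Group G] [Finite G] (K : Subgroup G) (y : G) :
    y ∈ subFinset K ↔ y ∈ K := by
  simp [subFinset]

/-- let `G` be a group of order 36, `H ≤ G` of order 9, `L₀ ≤ H` of order 3,
`R₀ = {r₁, r₂, r₃}` and `R₁` subsets of `H`, and `g ∈ G` such that `{1, r₁g, r₂g, r₃g}` is
a left transversal of `H` in `G`.  Then `S = L̂₀ − R₀·g·R̂₁` has all coefficients `±1`. -/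
theorem coefficients_pm_one {G : Type*} [Group G] [Fintype G] [DecidableEq G]
    (hGcard : Fintype.card G = 36)
    (H : Subgroup G) (hHcard : Nat.card H = 9)
    (L₀ : Subgroup G) (hL₀sub : L₀ ≤ H) (hL₀card : Nat.card L₀ = 3)
    (r₁ r₂ r₃ : G) (hr₁ : r₁ ∈ H) (hr₂ : r₂ ∈ H) (hr₃ : r₃ ∈ H)
    (R₁ : Finset G) (hR₁ : ↑R₁ ⊆ (H : Set G))
    (g : G)
    (htrans : ∀ x : G, ∃! i : Fin 4,
      (QuotientGroup.mk x : G ⧸ H) = QuotientGroup.mk (![1, r₁ * g, r₂ * g, r₃ * g] i))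
    (S : MonoidAlgebra ℤ G)
    (hS : S = (grpSum (subFinset H) - 2 * grpSum (subFinset L₀)) -
        grpSum ({r₁, r₂, r₃} : Finset G) * MonoidAlgebra.single g (1 : ℤ) *
          (grpSum (subFinset H) - 2 * grpSum R₁)) :
    ∀ g' : G, S.coeff g' = 1 ∨ S.coeff g' = -1 := by
  classical
  set a : Fin 4 → G := ![1, r₁ * g, r₂ * g, r₃ * g] with ha
  have hdist : ∀ i j : Fin 4,
      (QuotientGroup.mk (a i) : G ⧸ H) = QuotientGroup.mk (a j) → i = j := by
    intro i j hij
    obtain ⟨k, _, hu⟩ := htrans (a i)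
    exact (hu i rfl).trans (hu j hij).symm
  have hr12 : r₁ ≠ r₂ := fun h =>
    absurd (hdist 1 2 (by simp [ha, h])) (by decide)
  have hr13 : r₁ ≠ r₃ := fun h =>
    absurd (hdist 1 3 (by simp [ha, h])) (by decide)
  have hr23 : r₂ ≠ r₃ := fun h =>
    absurd (hdist 2 3 (by simp [ha, h])) (by decide)
  have hB : grpSum ({r₁, r₂, r₃} : Finset G) =
      MonoidAlgebra.single r₁ 1 + MonoidAlgebra.single r₂ 1 + MonoidAlgebra.single r₃ 1 := by
    rw [grpSum, Finset.sum_insert (by simp [hr12, hr13]),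
      Finset.sum_insert (by simp [hr23]), Finset.sum_singleton, add_assoc]
  intro g'
  have hco : ∀ y : G, (y⁻¹ * g' ∈ H ↔
      (QuotientGroup.mk g' : G ⧸ H) = QuotientGroup.mk y) := by
    intro y
    rw [QuotientGroup.eq]
    constructor
    · intro h; simpa [mul_inv_rev] using H.inv_mem h
    · intro h; simpa [mul_inv_rev] using H.inv_mem h
  set D : MonoidAlgebra ℤ G := grpSum (subFinset H) - 2 * grpSum R₁ with hDdef
  have hD : ∀ y : G, D.coeff y =
      (if y ∈ H then (1:ℤ) else 0) - 2 * (if y ∈ R₁ then 1 else 0) := by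
    intro y
    rw [hDdef, MonoidAlgebra.coeff_sub, Finsupp.sub_apply, two_mul_apply, grpSum_apply, grpSum_apply]
    simp only [mem_subFinset]
  have hSg : S.coeff g' = ((if g' ∈ H then (1:ℤ) else 0) - 2 * (if g' ∈ L₀ then 1 else 0)) -
      (D.coeff ((r₁*g)⁻¹ * g') + D.coeff ((r₂*g)⁻¹ * g') + D.coeff ((r₃*g)⁻¹ * g')) := by
    rw [hS]
    have hBD : grpSum ({r₁, r₂, r₃} : Finset G) * MonoidAlgebra.single g (1:ℤ) * D =
        MonoidAlgebra.single (r₁*g) (1:ℤ) * D + MonoidAlgebra.single (r₂*g) (1:ℤ) * D +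
          MonoidAlgebra.single (r₃*g) (1:ℤ) * D := by
      rw [hB]
      simp [add_mul, MonoidAlgebra.single_mul_single]
    rw [hBD, MonoidAlgebra.coeff_sub, MonoidAlgebra.coeff_sub, MonoidAlgebra.coeff_add,
        MonoidAlgebra.coeff_add, Finsupp.sub_apply, Finsupp.sub_apply, Finsupp.add_apply, Finsupp.add_apply,
      two_mul_apply, grpSum_apply, grpSum_apply,
      MonoidAlgebra.coeff_single_mul_apply, MonoidAlgebra.coeff_single_mul_apply,
      MonoidAlgebra.coeff_single_mul_apply, one_mul, one_mul, one_mul]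
    simp only [mem_subFinset]
  obtain ⟨i, hi, huniq⟩ := htrans g'
  have hmem : ∀ j : Fin 4, ((a j)⁻¹ * g' ∈ H ↔ j = i) := by
    intro j
    rw [hco]
    constructor
    · exact huniq j
    · rintro rfl; exact hi
  have hmemR : ∀ j : Fin 4, j ≠ i → (a j)⁻¹ * g' ∉ R₁ := by
    intro j hj h
    exact hj ((hmem j).mp (hR₁ h))
  have ha1 : a 1 = r₁ * g := by simp [ha]
  have ha2 : a 2 = r₂ * g := by simp [ha]
  have ha3 : a 3 = r₃ * g := by simp [ha]
  have ha0 : a 0 = 1 := by simp [ha]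
  have hg'H : g' ∈ H ↔ i = 0 := by
    have := hmem 0
    rw [ha0] at this; simpa [eq_comm] using this
  fin_cases i
  · -- g' ∈ H
    have h0 : g' ∈ H := hg'H.mpr rfl
    have h1 : (r₁*g)⁻¹ * g' ∉ H := fun h => absurd ((hmem 1).mp (by rwa [ha1])) (by decide)
    have h2 : (r₂*g)⁻¹ * g' ∉ H := fun h => absurd ((hmem 2).mp (by rwa [ha2])) (by decide)
    have h3 : (r₃*g)⁻¹ * g' ∉ H := fun h => absurd ((hmem 3).mp (by rwa [ha3])) (by decide)
    have h1R : (r₁*g)⁻¹ * g' ∉ R₁ := fun h => h1 (hR₁ h)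
    have h2R : (r₂*g)⁻¹ * g' ∉ R₁ := fun h => h2 (hR₁ h)
    have h3R : (r₃*g)⁻¹ * g' ∉ R₁ := fun h => h3 (hR₁ h)
    rw [hSg, hD, hD, hD]
    simp only [mul_inv_rev] at h1 h2 h3 h1R h2R h3R
    by_cases hL : g' ∈ L₀
    · right; simp [h0, h1, h2, h3, h1R, h2R, h3R, hL]
    · left; simp [h0, h1, h2, h3, h1R, h2R, h3R, hL]
  · have hnH : g' ∉ H := fun h => absurd (hg'H.mp h) (by decide)
    have hnL : g' ∉ L₀ := fun h => hnH (hL₀sub h)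
    have h1 : (r₁*g)⁻¹ * g' ∈ H := by have := (hmem 1).mpr rfl; rwa [ha1] at this
    have h2 : (r₂*g)⁻¹ * g' ∉ H := fun h => absurd ((hmem 2).mp (by rwa [ha2])) (by decide)
    have h3 : (r₃*g)⁻¹ * g' ∉ H := fun h => absurd ((hmem 3).mp (by rwa [ha3])) (by decide)
    have h2R : (r₂*g)⁻¹ * g' ∉ R₁ := fun h => h2 (hR₁ h)
    have h3R : (r₃*g)⁻¹ * g' ∉ R₁ := fun h => h3 (hR₁ h)
    rw [hSg, hD, hD, hD]
    simp only [mul_inv_rev] at h1 h2 h3 h2R h3R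
    by_cases hR : g⁻¹ * r₁⁻¹ * g' ∈ R₁
    · left; simp [hnH, hnL, h1, h2, h3, h2R, h3R, hR]
    · right; simp [hnH, hnL, h1, h2, h3, h2R, h3R, hR]
  · have hnH : g' ∉ H := fun h => absurd (hg'H.mp h) (by decide)
    have hnL : g' ∉ L₀ := fun h => hnH (hL₀sub h)
    have h2 : (r₂*g)⁻¹ * g' ∈ H := by have := (hmem 2).mpr rfl; rwa [ha2] at this
    have h1 : (r₁*g)⁻¹ * g' ∉ H := fun h => absurd ((hmem 1).mp (by rwa [ha1])) (by decide)
    have h3 : (r₃*g)⁻¹ * g' ∉ H := fun h => absurd ((hmem 3).mp (by rwa [ha3])) (by decide)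
    have h1R : (r₁*g)⁻¹ * g' ∉ R₁ := fun h => h1 (hR₁ h)
    have h3R : (r₃*g)⁻¹ * g' ∉ R₁ := fun h => h3 (hR₁ h)
    rw [hSg, hD, hD, hD]
    simp only [mul_inv_rev] at h1 h2 h3 h1R h3R
    by_cases hR : g⁻¹ * r₂⁻¹ * g' ∈ R₁
    · left; simp [hnH, hnL, h1, h2, h3, h1R, h3R, hR]
    · right; simp [hnH, hnL, h1, h2, h3, h1R, h3R, hR]
  · have hnH : g' ∉ H := fun h => absurd (hg'H.mp h) (by decide)
    have hnL : g' ∉ L₀ := fun h => hnH (hL₀sub h)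
    have h3 : (r₃*g)⁻¹ * g' ∈ H := by have := (hmem 3).mpr rfl; rwa [ha3] at this
    have h1 : (r₁*g)⁻¹ * g' ∉ H := fun h => absurd ((hmem 1).mp (by rwa [ha1])) (by decide)
    have h2 : (r₂*g)⁻¹ * g' ∉ H := fun h => absurd ((hmem 2).mp (by rwa [ha2])) (by decide)
    have h1R : (r₁*g)⁻¹ * g' ∉ R₁ := fun h => h1 (hR₁ h)
    have h2R : (r₂*g)⁻¹ * g' ∉ R₁ := fun h => h2 (hR₁ h)
    rw [hSg, hD, hD, hD]
    simp only [mul_inv_rev] at h1 h2 h3 h1R h2R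
    by_cases hR : g⁻¹ * r₃⁻¹ * g' ∈ R₁
    · left; simp [hnH, hnL, h1, h2, h3, h1R, h2R, hR]
    · right; simp [hnH, hnL, h1, h2, h3, h1R, h2R, hR]
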